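/- arXiv:1103.5862 — 2 statements merged into one kernel-verified Lean document; each statement's English description precedes it below -/
import Mathlib

section
/- Let Σ be a submanifold of (M,η) carrying an almost Kähler–Poisson structure θ with characteristic function γ², let P^{ij} = {x^i,x^j} be viewed as the map P(X) = P^{ij} η_{jk} X^k ∂_i on TM, and let J = γ^{-1}θ be the associated almost complex structure on Σ. Then for all X ∈ TM and Y ∈ TΣ: (i) P(Y) = γ J(Y); (ii) P²(X) = −γ² η(X, e_a) g^{ab} e_b; (iii) Tr P² = (P²)^i_i = −n γ². In particular, −γ^{-2} P² is the orthogonal projection of TM onto TΣ. -/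
open scoped BigOperators

namespace KP

/-- Partial derivative of a real-valued function on `ℝ^k` in the `a`-th coordinate
direction. -/
noncomputable def pd {k : ℕ} (a : Fin k) (f : (Fin k → ℝ) → ℝ) (p : Fin k → ℝ) : ℝ :=
  fderiv ℝ f p (Pi.single a 1)

variable {n m : ℕ}

/-- The Poisson bracket `{f,g} = θ^{ab} (∂_a f)(∂_b g)` associated to a bivector `θ`. -/
noncomputable def pbr (θ : (Fin n → ℝ) → Fin n → Fin n → ℝ)
    (f g : (Fin n → ℝ) → ℝ) (p : Fin n → ℝ) : ℝ :=
  ∑ a, ∑ b, θ p a b * pd a f p * pd b g p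

/-- Antisymmetry of a bivector. -/
def Antisymm (θ : (Fin n → ℝ) → Fin n → Fin n → ℝ) : Prop :=
  ∀ p a b, θ p a b = - θ p b a

/-- The Jacobi identity for a bivector `θ` (so that `θ` is a Poisson bivector). -/
def JacobiId (θ : (Fin n → ℝ) → Fin n → Fin n → ℝ) : Prop :=
  ∀ p a b c, ∑ d, (θ p a d * pd d (fun q => θ q b c) p
    + θ p b d * pd d (fun q => θ q c a) p
    + θ p c d * pd d (fun q => θ q a b) p) = 0

/-- Smoothness of a field with two indices. -/
def Smooth2 {k l k' : ℕ} (f : (Fin k → ℝ) → Fin l → Fin k' → ℝ) : Prop :=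
  ∀ i j, ContDiff ℝ (⊤ : ℕ∞) fun q => f q i j

/-- A Riemannian metric `g` in local coordinates, with given inverse `gi`:
smoothness, symmetry, positive definiteness and the inverse property. -/
def IsMetric {k : ℕ} (g gi : (Fin k → ℝ) → Fin k → Fin k → ℝ) : Prop :=
  Smooth2 g ∧
  (∀ q i j, g q i j = g q j i) ∧
  (∀ (q : Fin k → ℝ) (v : Fin k → ℝ), v ≠ 0 → 0 < ∑ i, ∑ j, g q i j * v i * v j) ∧
  (∀ q i j, (∑ l, g q i l * gi q l j) = if i = j then (1:ℝ) else 0)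

/-- Christoffel symbols `Γ^a_{bc}` of the Levi-Civita connection of the metric `g`
(with inverse `gi`). -/
noncomputable def Chr {k : ℕ} (g gi : (Fin k → ℝ) → Fin k → Fin k → ℝ)
    (q : Fin k → ℝ) (a b c : Fin k) : ℝ :=
  (1/2) * ∑ d, gi q a d *
    (pd b (fun r => g r d c) q + pd c (fun r => g r d b) q - pd d (fun r => g r b c) q)

/-- The Riemann curvature tensor `R^a_{bcd}` of the Levi-Civita connection of `g`,
with the convention `R(e_c, e_d) e_b = R^a_{bcd} e_a`. -/
noncomputable def Riem {k : ℕ} (g gi : (Fin k → ℝ) → Fin k → Fin k → ℝ)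
    (q : Fin k → ℝ) (a b c d : Fin k) : ℝ :=
  pd c (fun r => Chr g gi r a d b) q - pd d (fun r => Chr g gi r a c b) q
  + ∑ e, (Chr g gi q a c e * Chr g gi q e d b - Chr g gi q a d e * Chr g gi q e c b)

/-- The fully lowered curvature tensor `R_{abcd} = g_{ae} R^e_{bcd}`, so that
`R(X,Y,Z,V) = g(R(Z,V)Y, X) = R_{abcd} X^a Y^b Z^c V^d`. -/
noncomputable def RiemL {k : ℕ} (g gi : (Fin k → ℝ) → Fin k → Fin k → ℝ)
    (q : Fin k → ℝ) (a b c d : Fin k) : ℝ :=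
  ∑ e, g q a e * Riem g gi q e b c d

/-- The induced metric `g_{ab} = η_{ij} (∂_a x^i)(∂_b x^j)` on the submanifold `Σ`
embedded via `x` in `(M,η)`. -/
noncomputable def ind (η : (Fin m → ℝ) → Fin m → Fin m → ℝ)
    (x : (Fin n → ℝ) → Fin m → ℝ) (p : Fin n → ℝ) (a b : Fin n) : ℝ :=
  ∑ i, ∑ j, η (x p) i j * pd a (fun q => x q i) p * pd b (fun q => x q j) p

/-- Smoothness of the embedding. -/
def SmoothEmb (x : (Fin n → ℝ) → Fin m → ℝ) : Prop :=
  ∀ i, ContDiff ℝ (⊤ : ℕ∞) fun q => x q i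

/-- `θ` is an almost Kähler–Poisson structure on `Σ` (with induced metric of inverse
`gi`) with characteristic function `γ2`:  `θ` is a smooth Poisson bivector, `γ2` is
smooth and strictly positive, and `γ² g^{ab} = θ^{ap} θ^{bq} g_{pq}`. -/
def IsAKP (η : (Fin m → ℝ) → Fin m → Fin m → ℝ) (x : (Fin n → ℝ) → Fin m → ℝ)
    (θ : (Fin n → ℝ) → Fin n → Fin n → ℝ) (γ2 : (Fin n → ℝ) → ℝ)
    (gi : (Fin n → ℝ) → Fin n → Fin n → ℝ) : Prop :=
  Antisymm θ ∧ JacobiId θ ∧ Smooth2 θ ∧ Smooth2 gi ∧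
  ContDiff ℝ (⊤ : ℕ∞) γ2 ∧ (∀ p, 0 < γ2 p) ∧
  (∀ p a b, (∑ c, ind η x p a c * gi p c b) = if a = b then (1:ℝ) else 0) ∧
  (∀ p a b, γ2 p * gi p a b = ∑ c, ∑ d, θ p a c * θ p b d * ind η x p c d)

/-- `P^{ij} = {x^i, x^j}`. -/
noncomputable def Pbig (x : (Fin n → ℝ) → Fin m → ℝ)
    (θ : (Fin n → ℝ) → Fin n → Fin n → ℝ) (p : Fin n → ℝ) (i j : Fin m) : ℝ :=
  pbr θ (fun q => x q i) (fun q => x q j) p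

/-- The map `P : TM → TM`, `P(X)^i = P^{ij} η_{jk} X^k`. -/
noncomputable def Pmap (η : (Fin m → ℝ) → Fin m → Fin m → ℝ)
    (x : (Fin n → ℝ) → Fin m → ℝ) (θ : (Fin n → ℝ) → Fin n → Fin n → ℝ)
    (p : Fin n → ℝ) (X : Fin m → ℝ) (i : Fin m) : ℝ :=
  ∑ j, ∑ k, Pbig x θ p i j * η (x p) j k * X k

/-- `D^i(u) = γ^{-2} {u, x^k}{x^i, x^l} η_{kl}`. -/
noncomputable def Dop (η : (Fin m → ℝ) → Fin m → Fin m → ℝ)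
    (x : (Fin n → ℝ) → Fin m → ℝ) (θ : (Fin n → ℝ) → Fin n → Fin n → ℝ)
    (γ2 : (Fin n → ℝ) → ℝ) (u : (Fin n → ℝ) → ℝ) (p : Fin n → ℝ) (i : Fin m) : ℝ :=
  (γ2 p)⁻¹ * ∑ k, ∑ l, pbr θ u (fun q => x q k) p
    * pbr θ (fun q => x q i) (fun q => x q l) p * η (x p) k l

/-- `D^{ik} = D^i(x^k)`. -/
noncomputable def Dmat (η : (Fin m → ℝ) → Fin m → Fin m → ℝ)
    (x : (Fin n → ℝ) → Fin m → ℝ) (θ : (Fin n → ℝ) → Fin n → Fin n → ℝ)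
    (γ2 : (Fin n → ℝ) → ℝ) (p : Fin n → ℝ) (i k : Fin m) : ℝ :=
  Dop η x θ γ2 (fun q => x q k) p i

/-- `Π^{ij} = η^{ij} − D^{ij}`, the projection onto the normal space. -/
noncomputable def PiU (η ηi : (Fin m → ℝ) → Fin m → Fin m → ℝ)
    (x : (Fin n → ℝ) → Fin m → ℝ) (θ : (Fin n → ℝ) → Fin n → Fin n → ℝ)
    (γ2 : (Fin n → ℝ) → ℝ) (p : Fin n → ℝ) (i j : Fin m) : ℝ :=
  ηi (x p) i j - Dmat η x θ γ2 p i j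

/-- The lowered projection `Π_{ij} = η_{ij} − D_{ij}`. -/
noncomputable def PiL (η : (Fin m → ℝ) → Fin m → Fin m → ℝ)
    (x : (Fin n → ℝ) → Fin m → ℝ) (θ : (Fin n → ℝ) → Fin n → Fin n → ℝ)
    (γ2 : (Fin n → ℝ) → ℝ) (p : Fin n → ℝ) (i j : Fin m) : ℝ :=
  η (x p) i j - ∑ k, ∑ l, η (x p) i k * η (x p) j l * Dmat η x θ γ2 p k l

/-- The ambient components `X^i = c^a ∂_a x^i` of the tangent field with coefficient
functions `c`. -/
noncomputable def tv (x : (Fin n → ℝ) → Fin m → ℝ) (c : (Fin n → ℝ) → Fin n → ℝ)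
    (p : Fin n → ℝ) (i : Fin m) : ℝ :=
  ∑ a, c p a * pd a (fun q => x q i) p

/-- Lowering an ambient index along `Σ` : `V_i = η_{ij} V^j`. -/
noncomputable def low (η : (Fin m → ℝ) → Fin m → Fin m → ℝ)
    (x : (Fin n → ℝ) → Fin m → ℝ) (V : (Fin n → ℝ) → Fin m → ℝ)
    (p : Fin n → ℝ) (i : Fin m) : ℝ :=
  ∑ j, η (x p) i j * V p j

/-- The ambient inner product `η(V,W)` along `Σ`. -/
noncomputable def ipM (η : (Fin m → ℝ) → Fin m → Fin m → ℝ)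
    (x : (Fin n → ℝ) → Fin m → ℝ) (V W : (Fin n → ℝ) → Fin m → ℝ)
    (p : Fin n → ℝ) : ℝ :=
  ∑ i, ∑ j, η (x p) i j * V p i * W p j

/-- The ambient covariant derivative `(∇̄_{e_a} V)^i` of an ambient-vector field `V`
along `Σ`. -/
noncomputable def barD (η ηi : (Fin m → ℝ) → Fin m → Fin m → ℝ)
    (x : (Fin n → ℝ) → Fin m → ℝ) (V : (Fin n → ℝ) → Fin m → ℝ)
    (p : Fin n → ℝ) (a : Fin n) (i : Fin m) : ℝ :=
  pd a (fun q => V q i) p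
    + ∑ k, ∑ l, Chr η ηi (x p) i k l * pd a (fun q => x q k) p * V p l

/-- `∇̂^i u = D^i(u)` on scalars. -/
noncomputable def nhS (η : (Fin m → ℝ) → Fin m → Fin m → ℝ)
    (x : (Fin n → ℝ) → Fin m → ℝ) (θ : (Fin n → ℝ) → Fin n → Fin n → ℝ)
    (γ2 : (Fin n → ℝ) → ℝ) (u : (Fin n → ℝ) → ℝ) (p : Fin n → ℝ) (i : Fin m) : ℝ :=
  Dop η x θ γ2 u p i

/-- `∇̂^i V^j = D^i(V^j) + D^{ik} Γ̄^j_{kl} V^l` for ambient-vector fields `V` along `Σ`. -/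
noncomputable def nhV (η ηi : (Fin m → ℝ) → Fin m → Fin m → ℝ)
    (x : (Fin n → ℝ) → Fin m → ℝ) (θ : (Fin n → ℝ) → Fin n → Fin n → ℝ)
    (γ2 : (Fin n → ℝ) → ℝ) (V : (Fin n → ℝ) → Fin m → ℝ)
    (p : Fin n → ℝ) (i j : Fin m) : ℝ :=
  Dop η x θ γ2 (fun q => V q j) p i
    + ∑ k, ∑ l, Dmat η x θ γ2 p i k * Chr η ηi (x p) j k l * V p l

/-- `∇̂^i T^{jk}` for `2`-contravariant tensor fields `T` along `Σ`. -/
noncomputable def nhT2 (η ηi : (Fin m → ℝ) → Fin m → Fin m → ℝ)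
    (x : (Fin n → ℝ) → Fin m → ℝ) (θ : (Fin n → ℝ) → Fin n → Fin n → ℝ)
    (γ2 : (Fin n → ℝ) → ℝ) (T : (Fin n → ℝ) → Fin m → Fin m → ℝ)
    (p : Fin n → ℝ) (i j k : Fin m) : ℝ :=
  Dop η x θ γ2 (fun q => T q j k) p i
    + ∑ l, ∑ l', Dmat η x θ γ2 p i l * Chr η ηi (x p) j l l' * T p l' k
    + ∑ l, ∑ l', Dmat η x θ γ2 p i l * Chr η ηi (x p) k l l' * T p j l'

/-- `∇̂^i T_{jk}` for `2`-covariant tensor fields `T` along `Σ`. -/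
noncomputable def nhT02 (η ηi : (Fin m → ℝ) → Fin m → Fin m → ℝ)
    (x : (Fin n → ℝ) → Fin m → ℝ) (θ : (Fin n → ℝ) → Fin n → Fin n → ℝ)
    (γ2 : (Fin n → ℝ) → ℝ) (T : (Fin n → ℝ) → Fin m → Fin m → ℝ)
    (p : Fin n → ℝ) (i j k : Fin m) : ℝ :=
  Dop η x θ γ2 (fun q => T q j k) p i
    - ∑ l, ∑ l', Dmat η x θ γ2 p i l * Chr η ηi (x p) l' l j * T p l' k
    - ∑ l, ∑ l', Dmat η x θ γ2 p i l * Chr η ηi (x p) l' l k * T p j l'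

/-- The second fundamental form `α(X,Y) = Π(∇̂_X Y)` (ambient components) for tangent
fields with coefficients `c`, `d`. -/
noncomputable def sff (η ηi : (Fin m → ℝ) → Fin m → Fin m → ℝ)
    (x : (Fin n → ℝ) → Fin m → ℝ) (θ : (Fin n → ℝ) → Fin n → Fin n → ℝ)
    (γ2 : (Fin n → ℝ) → ℝ) (c d : (Fin n → ℝ) → Fin n → ℝ)
    (p : Fin n → ℝ) (i : Fin m) : ℝ :=
  ∑ j, ((if i = j then (1:ℝ) else 0) - ∑ k, Dmat η x θ γ2 p i k * η (x p) k j)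
    * (∑ a, c p a * barD η ηi x (tv x d) p a j)

/-- `B_A^{ij} = −γ² ∇̂^i N_A^j`. -/
noncomputable def Bmap (η ηi : (Fin m → ℝ) → Fin m → Fin m → ℝ)
    (x : (Fin n → ℝ) → Fin m → ℝ) (θ : (Fin n → ℝ) → Fin n → Fin n → ℝ)
    (γ2 : (Fin n → ℝ) → ℝ) (N : (Fin n → ℝ) → Fin m → ℝ)
    (p : Fin n → ℝ) (i j : Fin m) : ℝ :=
  - γ2 p * nhV η ηi x θ γ2 N p i j

/-- `N` is a smooth orthonormal frame of the normal bundle `TΣ^⊥` :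
each `N_A` is a smooth unit normal field, they are mutually orthonormal, and they
are complete, i.e. `Σ_A N_A^i N_A^j = η^{ij} − D^{ij} = Π^{ij}`. -/
def NormalFrame {r : ℕ} (η ηi : (Fin m → ℝ) → Fin m → Fin m → ℝ)
    (x : (Fin n → ℝ) → Fin m → ℝ) (θ : (Fin n → ℝ) → Fin n → Fin n → ℝ)
    (γ2 : (Fin n → ℝ) → ℝ) (N : Fin r → (Fin n → ℝ) → Fin m → ℝ) : Prop :=
  (∀ A i, ContDiff ℝ (⊤ : ℕ∞) fun q => N A q i) ∧
  (∀ A B p, ipM η x (N A) (N B) p = if A = B then (1:ℝ) else 0) ∧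
  (∀ A p a, (∑ i, ∑ j, η (x p) i j * N A p i * pd a (fun q => x q j) p) = 0) ∧
  (∀ p i j, (∑ A, N A p i * N A p j) = PiU η ηi x θ γ2 p i j)



section Aux

lemma sum3_comm {α β γ : Type*} [Fintype α] [Fintype β] [Fintype γ]
    (f : α → β → γ → ℝ) :
    ∑ a, ∑ b, ∑ c, f a b c = ∑ c, ∑ a, ∑ b, f a b c := by
  rw [show (∑ a, ∑ b, ∑ c, f a b c) = ∑ a, ∑ c, ∑ b, f a b c from
    Finset.sum_congr rfl fun a _ => Finset.sum_comm]
  exact Finset.sum_comm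

lemma sum4_comm {α β γ δ : Type*} [Fintype α] [Fintype β] [Fintype γ] [Fintype δ]
    (f : α → β → γ → δ → ℝ) :
    ∑ a, ∑ b, ∑ c, ∑ d, f a b c d = ∑ c, ∑ d, ∑ a, ∑ b, f a b c d := by
  rw [sum3_comm (fun a b c => ∑ d, f a b c d)]
  exact Finset.sum_congr rfl fun c _ => sum3_comm _

/-- `E_a(X) = ∂_a x^j η_{jk} X^k`, the tangential pairing of an ambient vector. -/
noncomputable def Ee (η : (Fin m → ℝ) → Fin m → Fin m → ℝ) (x : (Fin n → ℝ) → Fin m → ℝ)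
    (p : Fin n → ℝ) (a : Fin n) (X : Fin m → ℝ) : ℝ :=
  ∑ j, ∑ k, pd a (fun q => x q j) p * η (x p) j k * X k

lemma Pmap_eq (η : (Fin m → ℝ) → Fin m → Fin m → ℝ) (x : (Fin n → ℝ) → Fin m → ℝ)
    (θ : (Fin n → ℝ) → Fin n → Fin n → ℝ) (p : Fin n → ℝ) (X : Fin m → ℝ) (i : Fin m) :
    Pmap η x θ p X i = ∑ a, ∑ b, θ p a b * Ee η x p b X * pd a (fun q => x q i) p := by
  unfold Pmap Pbig pbr Ee
  simp only [Finset.sum_mul, Finset.mul_sum]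
  rw [sum4_comm]
  refine Finset.sum_congr rfl fun a _ => Finset.sum_congr rfl fun b _ =>
    Finset.sum_congr rfl fun j _ => Finset.sum_congr rfl fun k _ => by ring

lemma Ee_tv (η : (Fin m → ℝ) → Fin m → Fin m → ℝ) (x : (Fin n → ℝ) → Fin m → ℝ)
    (p : Fin n → ℝ) (a : Fin n) (c : (Fin n → ℝ) → Fin n → ℝ) :
    Ee η x p a (tv x c p) = ∑ b, ind η x p a b * c p b := by
  unfold Ee tv ind
  simp only [Finset.sum_mul, Finset.mul_sum]
  rw [sum3_comm]
  refine Finset.sum_congr rfl fun b _ => Finset.sum_congr rfl fun j _ =>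
    Finset.sum_congr rfl fun k _ => by ring

lemma Ee_eq_S (η : (Fin m → ℝ) → Fin m → Fin m → ℝ) (x : (Fin n → ℝ) → Fin m → ℝ)
    (hsym : ∀ q i j, η q i j = η q j i) (p : Fin n → ℝ) (a : Fin n) (X : Fin m → ℝ) :
    Ee η x p a X = ∑ i', ∑ j', η (x p) i' j' * X i' * pd a (fun q => x q j') p := by
  unfold Ee
  rw [Finset.sum_comm]
  refine Finset.sum_congr rfl fun k _ => Finset.sum_congr rfl fun j _ => by
    rw [hsym (x p) j k]; ring

lemma ind_symm (η : (Fin m → ℝ) → Fin m → Fin m → ℝ) (x : (Fin n → ℝ) → Fin m → ℝ)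
    (hsym : ∀ q i j, η q i j = η q j i) (p : Fin n → ℝ) (a b : Fin n) :
    ind η x p a b = ind η x p b a := by
  unfold ind
  rw [Finset.sum_comm]
  refine Finset.sum_congr rfl fun i _ => Finset.sum_congr rfl fun j _ => by
    rw [hsym (x p) j i]; ring

lemma gi_symm (η : (Fin m → ℝ) → Fin m → Fin m → ℝ) (x : (Fin n → ℝ) → Fin m → ℝ)
    (θ : (Fin n → ℝ) → Fin n → Fin n → ℝ) (γ2 : (Fin n → ℝ) → ℝ)
    (gi : (Fin n → ℝ) → Fin n → Fin n → ℝ)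
    (hsym : ∀ q i j, η q i j = η q j i)
    (hpos : ∀ p, 0 < γ2 p)
    (heq : ∀ p a b, γ2 p * gi p a b = ∑ c, ∑ d, θ p a c * θ p b d * ind η x p c d)
    (p : Fin n → ℝ) (a b : Fin n) : gi p a b = gi p b a := by
  have h1 : γ2 p * gi p a b = γ2 p * gi p b a := by
    rw [heq p a b, heq p b a, Finset.sum_comm]
    refine Finset.sum_congr rfl fun c _ => Finset.sum_congr rfl fun d _ => by
      rw [ind_symm η x hsym p d c]; ring
  exact mul_left_cancel₀ (ne_of_gt (hpos p)) h1

lemma key_contr (η : (Fin m → ℝ) → Fin m → Fin m → ℝ) (x : (Fin n → ℝ) → Fin m → ℝ)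
    (θ : (Fin n → ℝ) → Fin n → Fin n → ℝ) (γ2 : (Fin n → ℝ) → ℝ)
    (gi : (Fin n → ℝ) → Fin n → Fin n → ℝ)
    (hanti : Antisymm θ)
    (heq : ∀ p a b, γ2 p * gi p a b = ∑ c, ∑ d, θ p a c * θ p b d * ind η x p c d)
    (p : Fin n → ℝ) (a e : Fin n) :
    ∑ b, ∑ d, θ p a b * θ p d e * ind η x p b d = -(γ2 p * gi p a e) := by
  rw [show (∑ b, ∑ d, θ p a b * θ p d e * ind η x p b d)
      = ∑ b, ∑ d, -(θ p a b * θ p e d * ind η x p b d) from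
    Finset.sum_congr rfl fun b _ => Finset.sum_congr rfl fun d _ => by
      rw [hanti p d e]; ring]
  simp only [Finset.sum_neg_distrib]
  rw [← heq p a e]

lemma Psq (η : (Fin m → ℝ) → Fin m → Fin m → ℝ) (x : (Fin n → ℝ) → Fin m → ℝ)
    (θ : (Fin n → ℝ) → Fin n → Fin n → ℝ) (γ2 : (Fin n → ℝ) → ℝ)
    (gi : (Fin n → ℝ) → Fin n → Fin n → ℝ)
    (hanti : Antisymm θ)
    (heq : ∀ p a b, γ2 p * gi p a b = ∑ c, ∑ d, θ p a c * θ p b d * ind η x p c d)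
    (p : Fin n → ℝ) (X : Fin m → ℝ) (i : Fin m) :
    Pmap η x θ p (fun k => Pmap η x θ p X k) i
      = ∑ a, ∑ e, -(γ2 p * gi p a e) * Ee η x p e X * pd a (fun q => x q i) p := by
  have hc' : (fun k => Pmap η x θ p X k)
      = tv x (fun _ a => ∑ b, θ p a b * Ee η x p b X) p := by
    funext k
    rw [Pmap_eq]
    unfold tv
    exact Finset.sum_congr rfl fun a _ => (Finset.sum_mul _ _ _).symm
  rw [hc', Pmap_eq]
  calc ∑ a, ∑ b, θ p a b * Ee η x p b (tv x (fun _ a => ∑ e, θ p a e * Ee η x p e X) p)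
          * pd a (fun q => x q i) p
      = ∑ a, ∑ b, θ p a b * (∑ d, ind η x p b d * ∑ e, θ p d e * Ee η x p e X)
          * pd a (fun q => x q i) p := by
        refine Finset.sum_congr rfl fun a _ => Finset.sum_congr rfl fun b _ => by
          rw [Ee_tv]
    _ = ∑ a, ∑ e, (∑ b, ∑ d, θ p a b * θ p d e * ind η x p b d) * Ee η x p e X
          * pd a (fun q => x q i) p := by
        refine Finset.sum_congr rfl fun a _ => ?_
        simp only [Finset.mul_sum, Finset.sum_mul]
        rw [sum3_comm]
        exact Finset.sum_congr rfl fun e _ => Finset.sum_congr rfl fun b _ =>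
          Finset.sum_congr rfl fun d _ => by ring
    _ = ∑ a, ∑ e, -(γ2 p * gi p a e) * Ee η x p e X * pd a (fun q => x q i) p := by
        refine Finset.sum_congr rfl fun a _ => Finset.sum_congr rfl fun e _ => by
          rw [key_contr η x θ γ2 gi hanti heq p a e]

lemma sqrt_cancel (γ : ℝ) (hγ : 0 < γ) (S P : ℝ) :
    Real.sqrt γ * ((Real.sqrt γ)⁻¹ * S * P) = S * P := by
  have h : Real.sqrt γ ≠ 0 := ne_of_gt (Real.sqrt_pos.mpr hγ)
  field_simp

end Aux

/-- Properties of the map `P(X)^i = {x^i,x^j} η_{jk} X^k` on `TM`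
for a submanifold `Σ ⊂ (M,η)` with almost Kähler–Poisson structure `θ`, `γ²`:
(i) `P(Y) = γ J(Y)` for `Y ∈ TΣ`, where `J = γ^{-1}θ` is the associated almost
complex structure; (ii) `P²(X) = −γ² η(X,e_a) g^{ab} e_b`; (iii) `Tr P² = −n γ²`;
and in particular `−γ^{-2} P²` is the orthogonal projection of `TM` onto `TΣ`. -/
theorem statement_2 {n m : ℕ}
    (η ηi : (Fin m → ℝ) → Fin m → Fin m → ℝ) (x : (Fin n → ℝ) → Fin m → ℝ)
    (θ : (Fin n → ℝ) → Fin n → Fin n → ℝ) (γ2 : (Fin n → ℝ) → ℝ)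
    (gi : (Fin n → ℝ) → Fin n → Fin n → ℝ)
    (hη : IsMetric η ηi) (hx : SmoothEmb x) (hakp : IsAKP η x θ γ2 gi) :
    (∀ (c : (Fin n → ℝ) → Fin n → ℝ) (p : Fin n → ℝ) (i : Fin m),
      Pmap η x θ p (tv x c p) i
        = Real.sqrt (γ2 p) * ∑ a, ((Real.sqrt (γ2 p))⁻¹
            * ∑ b, (∑ e, θ p a e * ind η x p e b) * c p b) * pd a (fun q => x q i) p) ∧
    (∀ (p : Fin n → ℝ) (X : Fin m → ℝ) (i : Fin m),
      Pmap η x θ p (fun k => Pmap η x θ p X k) i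
        = - γ2 p * ∑ a, ∑ b, (∑ i', ∑ j', η (x p) i' j' * X i' * pd a (fun q => x q j') p)
            * gi p a b * pd b (fun q => x q i) p) ∧
    (∀ p : Fin n → ℝ,
      (∑ i, Pmap η x θ p (fun k => Pmap η x θ p (Pi.single i 1) k) i)
        = - (n : ℝ) * γ2 p) ∧
    (∀ (c : (Fin n → ℝ) → Fin n → ℝ) (p : Fin n → ℝ) (i : Fin m),
      - (γ2 p)⁻¹ * Pmap η x θ p (fun k => Pmap η x θ p (tv x c p) k) i = tv x c p i) ∧
    (∀ (p : Fin n → ℝ) (X : Fin m → ℝ),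
      (∀ a, (∑ i, ∑ j, η (x p) i j * X i * pd a (fun q => x q j) p) = 0) →
      ∀ i, Pmap η x θ p (fun k => Pmap η x θ p X k) i = 0) := by
  obtain ⟨hanti, _hjac, _hθ, _hgi, _hγ, hpos, hinv, heq⟩ := hakp
  have hsym := hη.2.1
  have h2 : ∀ (p : Fin n → ℝ) (X : Fin m → ℝ) (i : Fin m),
      Pmap η x θ p (fun k => Pmap η x θ p X k) i
        = - γ2 p * ∑ a, ∑ b, (∑ i', ∑ j', η (x p) i' j' * X i' * pd a (fun q => x q j') p)
            * gi p a b * pd b (fun q => x q i) p := by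
    intro p X i
    rw [Psq η x θ γ2 gi hanti heq p X i, Finset.sum_comm]
    simp only [Finset.mul_sum]
    refine Finset.sum_congr rfl fun a _ => Finset.sum_congr rfl fun b _ => ?_
    rw [gi_symm η x θ γ2 gi hsym hpos heq p b a, Ee_eq_S η x hsym p a X]
    ring
  refine ⟨?_, h2, ?_, ?_, ?_⟩
  · -- part (i)
    intro c p i
    rw [Pmap_eq η x θ p _ i, Finset.mul_sum]
    refine Finset.sum_congr rfl fun a _ => ?_
    rw [sqrt_cancel (γ2 p) (hpos p)]
    simp only [Ee_tv]
    simp only [Finset.sum_mul, Finset.mul_sum]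
    rw [Finset.sum_comm]
    exact Finset.sum_congr rfl fun b _ => Finset.sum_congr rfl fun d _ => by ring
  · -- part (iii)
    intro p
    have hsingle : ∀ (i : Fin m) (a : Fin n),
        (∑ i', ∑ j', η (x p) i' j' * (Pi.single i 1 : Fin m → ℝ) i'
          * pd a (fun q => x q j') p)
          = ∑ j', η (x p) i j' * pd a (fun q => x q j') p := by
      intro i a
      rw [Finset.sum_comm]
      refine Finset.sum_congr rfl fun j' _ => ?_
      rw [Finset.sum_eq_single i]
      · rw [Pi.single_eq_same, mul_one]
      · intro b _ hb
        rw [Pi.single_eq_of_ne hb, mul_zero, zero_mul]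
      · intro h; exact absurd (Finset.mem_univ i) h
    calc (∑ i, Pmap η x θ p (fun k => Pmap η x θ p (Pi.single i 1) k) i)
        = ∑ i : Fin m, - γ2 p * ∑ a, ∑ b, (∑ j', η (x p) i j' * pd a (fun q => x q j') p)
            * gi p a b * pd b (fun q => x q i) p := by
          refine Finset.sum_congr rfl fun i _ => ?_
          rw [h2 p (Pi.single i 1) i]
          congr 1
          exact Finset.sum_congr rfl fun a _ => Finset.sum_congr rfl fun b _ => by
            rw [hsingle i a]
      _ = ∑ a : Fin n, ∑ b : Fin n, ∑ i : Fin m, ∑ j' : Fin m,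
            - γ2 p * (η (x p) i j' * pd a (fun q => x q j') p * gi p a b
              * pd b (fun q => x q i) p) := by
          simp only [Finset.mul_sum, Finset.sum_mul]
          rw [sum3_comm, sum3_comm]
      _ = ∑ a : Fin n, ∑ b : Fin n, - γ2 p * (ind η x p b a * gi p a b) := by
          refine Finset.sum_congr rfl fun a _ => Finset.sum_congr rfl fun b _ => ?_
          unfold ind
          simp only [Finset.mul_sum, Finset.sum_mul]
          exact Finset.sum_congr rfl fun i _ => Finset.sum_congr rfl fun j _ => by ring
      _ = ∑ b : Fin n, ∑ a : Fin n, - γ2 p * (ind η x p b a * gi p a b) :=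
          Finset.sum_comm
      _ = ∑ _b : Fin n, - γ2 p := by
          refine Finset.sum_congr rfl fun b _ => ?_
          rw [show (∑ a, -γ2 p * (ind η x p b a * gi p a b))
              = -γ2 p * ∑ a, ind η x p b a * gi p a b by rw [Finset.mul_sum]]
          rw [hinv p b b, if_pos rfl, mul_one]
      _ = - (n : ℝ) * γ2 p := by
          simp [Finset.sum_const, Fintype.card_fin, nsmul_eq_mul]
  · -- part (iv)
    intro c p i
    rw [h2 p (tv x c p) i]
    have hγ : γ2 p ≠ 0 := ne_of_gt (hpos p)
    rw [show ∀ S : ℝ, -(γ2 p)⁻¹ * (-γ2 p * S) = S from fun S => by field_simp]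
    have hE : ∀ a, (∑ i', ∑ j', η (x p) i' j' * tv x c p i' * pd a (fun q => x q j') p)
        = ∑ d, ind η x p a d * c p d := by
      intro a
      rw [← Ee_eq_S η x hsym p a (tv x c p), Ee_tv]
    calc ∑ a, ∑ b, (∑ i', ∑ j', η (x p) i' j' * tv x c p i' * pd a (fun q => x q j') p)
            * gi p a b * pd b (fun q => x q i) p
        = ∑ a, ∑ b, ∑ d, ind η x p d a * c p d * gi p a b * pd b (fun q => x q i) p := by
          refine Finset.sum_congr rfl fun a _ => Finset.sum_congr rfl fun b _ => ?_
          rw [hE a]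
          simp only [Finset.sum_mul]
          exact Finset.sum_congr rfl fun d _ => by rw [ind_symm η x hsym p a d]
      _ = ∑ b, ∑ d, ∑ a, ind η x p d a * c p d * gi p a b * pd b (fun q => x q i) p := by
          rw [sum3_comm, sum3_comm]
      _ = ∑ b, c p b * pd b (fun q => x q i) p := by
          refine Finset.sum_congr rfl fun b _ => ?_
          calc ∑ d, ∑ a, ind η x p d a * c p d * gi p a b * pd b (fun q => x q i) p
              = ∑ d, (c p d * pd b (fun q => x q i) p) * ∑ a, ind η x p d a * gi p a b := by
                refine Finset.sum_congr rfl fun d _ => ?_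
                rw [Finset.mul_sum]
                exact Finset.sum_congr rfl fun a _ => by ring
            _ = ∑ d, (c p d * pd b (fun q => x q i) p) * (if d = b then (1:ℝ) else 0) := by
                refine Finset.sum_congr rfl fun d _ => by rw [hinv p d b]
            _ = c p b * pd b (fun q => x q i) p := by
                rw [Finset.sum_eq_single b]
                · rw [if_pos rfl, mul_one]
                · intro d _ hd; rw [if_neg hd, mul_zero]
                · intro h; exact absurd (Finset.mem_univ b) h
      _ = tv x c p i := rfl
  · -- part (v)
    intro p X hz i
    rw [h2 p X i]
    have h0 : (∑ a, ∑ b, (∑ i', ∑ j', η (x p) i' j' * X i' * pd a (fun q => x q j') p)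
        * gi p a b * pd b (fun q => x q i) p) = 0 := by
      refine Finset.sum_eq_zero fun a _ => Finset.sum_eq_zero fun b _ => ?_
      rw [hz a, zero_mul, zero_mul]
    rw [h0, mul_zero]

end KP
end

section
/- Let Σ be a submanifold of (M,η) with an almost Kähler–Poisson structure of characteristic function γ², and define B_A^{ij} = −γ² ∇̂^i N_A^j viewed as the map B_A(X) = B_A^{ij} X_j ∂_i. Then for every X ∈ TM one has B_A(X) = −γ² η(X, ∇̄_{e_a} N_A) g^{ab} e_b, and for every Y ∈ TΣ one has B_A(Y) = γ² W_A(Y), where W_A is the Weingarten map associated to the normal vector N_A. -/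
open scoped BigOperators

namespace KP

variable {n m : ℕ}

section Helpers

variable {k m : ℕ}

lemma pd_mul {f g : (Fin k → ℝ) → ℝ} {p : Fin k → ℝ} (a : Fin k)
    (hf : DifferentiableAt ℝ f p) (hg : DifferentiableAt ℝ g p) :
    pd a (fun q => f q * g q) p = pd a f p * g p + f p * pd a g p := by
  unfold pd
  rw [fderiv_fun_mul hf hg]
  simp only [ContinuousLinearMap.add_apply, ContinuousLinearMap.smul_apply, smul_eq_mul]
  ring

lemma pd_sum {ι : Type*} (s : Finset ι) (f : ι → (Fin k → ℝ) → ℝ) {p : Fin k → ℝ} (a : Fin k)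
    (h : ∀ i ∈ s, DifferentiableAt ℝ (f i) p) :
    pd a (fun q => ∑ i ∈ s, f i q) p = ∑ i ∈ s, pd a (f i) p := by
  unfold pd
  rw [fderiv_fun_sum h]
  simp

lemma pd_comp (f : (Fin m → ℝ) → ℝ) (x : (Fin k → ℝ) → Fin m → ℝ) (p : Fin k → ℝ) (a : Fin k)
    (hf : DifferentiableAt ℝ f (fun i => x p i))
    (hx : ∀ i, DifferentiableAt ℝ (fun q => x q i) p) :
    pd a (fun q => f (fun i => x q i)) p
      = ∑ j, pd j f (fun i => x p i) * pd a (fun q => x q j) p := by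
  have hX : DifferentiableAt ℝ (fun q (i : Fin m) => x q i) p := by
    rw [differentiableAt_pi]; exact hx
  unfold pd
  have hcomp : (fun q => f (fun i => x q i)) = f ∘ (fun q (i : Fin m) => x q i) := rfl
  rw [hcomp, fderiv_comp (x := p) hf hX]
  rw [fderiv_pi hx]
  simp only [ContinuousLinearMap.coe_comp', Function.comp_apply]
  have hv : (ContinuousLinearMap.pi fun i => fderiv ℝ (fun q => x q i) p) (Pi.single a 1)
      = fun j => fderiv ℝ (fun q => x q j) p (Pi.single a 1) := rfl
  rw [hv]
  rw [pi_eq_sum_univ (fun j => fderiv ℝ (fun q => x q j) p (Pi.single a 1))]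
  rw [map_sum]
  congr 1; ext j
  rw [map_smul]
  have hsingle : (fun j_1 => if j = j_1 then (1:ℝ) else 0) = Pi.single j 1 := by
    funext i; simp [Pi.single_apply, eq_comm]
  rw [smul_eq_mul, mul_comm, hsingle]

lemma pd_pd_comm (f : (Fin k → ℝ) → ℝ) (hf : ContDiff ℝ (⊤ : ℕ∞) f) (a b : Fin k) (p : Fin k → ℝ) :
    pd a (fun q => pd b f q) p = pd b (fun q => pd a f q) p := by
  have hsym : IsSymmSndFDerivAt ℝ f p :=
    hf.contDiffAt.isSymmSndFDerivAt (by rw [minSmoothness_of_isRCLikeNormedField]; exact WithTop.coe_le_coe.mpr (le_top : (2:ℕ∞) ≤ ⊤))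
  have hdf : DifferentiableAt ℝ (fderiv ℝ f) p :=
    ((hf.fderiv_right (m := (⊤ : ℕ∞)) (by simp)).differentiable (by simp)) p
  have key : ∀ c : Fin k, (fun q => pd c f q) = fun q => (fderiv ℝ f q) (Pi.single c 1) := by
    intro c; rfl
  have hres : ∀ c d : Fin k, pd c (fun q => pd d f q) p
      = fderiv ℝ (fderiv ℝ f) p (Pi.single c 1) (Pi.single d 1) := by
    intro c d
    rw [key d]
    unfold pd
    rw [fderiv_clm_apply hdf (differentiableAt_const _)]
    simp
  rw [hres a b, hres b a, hsym]

lemma sum_interchange {I J K L : Type*} [Fintype I] [Fintype J] [Fintype K] [Fintype L]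
    (A : I → ℝ) (B : I → K → ℝ) (C : J → ℝ) (D : J → L → ℝ) (E : K → L → ℝ) :
    ∑ k, ∑ l, (∑ a, A a * B a k) * (∑ c, C c * D c l) * E k l
      = ∑ a, ∑ c, A a * C c * (∑ k, ∑ l, B a k * D c l * E k l) := by
  simp only [Finset.sum_mul, Finset.mul_sum]
  calc ∑ k : K, ∑ l : L, ∑ c : J, ∑ a : I, A a * B a k * (C c * D c l) * E k l
      = ∑ k : K, ∑ l : L, ∑ a : I, ∑ c : J, A a * B a k * (C c * D c l) * E k l :=
        Finset.sum_congr rfl fun k _ => Finset.sum_congr rfl fun l _ => Finset.sum_comm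
    _ = ∑ k : K, ∑ a : I, ∑ l : L, ∑ c : J, A a * B a k * (C c * D c l) * E k l :=
        Finset.sum_congr rfl fun k _ => Finset.sum_comm
    _ = ∑ a : I, ∑ k : K, ∑ l : L, ∑ c : J, A a * B a k * (C c * D c l) * E k l :=
        Finset.sum_comm
    _ = ∑ a : I, ∑ k : K, ∑ c : J, ∑ l : L, A a * B a k * (C c * D c l) * E k l :=
        Finset.sum_congr rfl fun a _ => Finset.sum_congr rfl fun k _ => Finset.sum_comm
    _ = ∑ a : I, ∑ c : J, ∑ k : K, ∑ l : L, A a * B a k * (C c * D c l) * E k l :=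
        Finset.sum_congr rfl fun a _ => Finset.sum_comm
    _ = ∑ a : I, ∑ c : J, ∑ k : K, ∑ l : L, A a * C c * (B a k * D c l * E k l) :=
        Finset.sum_congr rfl fun a _ => Finset.sum_congr rfl fun c _ =>
          Finset.sum_congr rfl fun k _ => Finset.sum_congr rfl fun l _ => by ring

end Helpers

section Dop

variable {n m : ℕ}

/-- The key simplification: `D^i(u) = g^{ac} (∂_a u)(∂_c x^i)`. -/
lemma dop_eq (η : (Fin m → ℝ) → Fin m → Fin m → ℝ) (x : (Fin n → ℝ) → Fin m → ℝ)
    (θ : (Fin n → ℝ) → Fin n → Fin n → ℝ) (γ2 : (Fin n → ℝ) → ℝ)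
    (gi : (Fin n → ℝ) → Fin n → Fin n → ℝ)
    (hγ : ∀ p, 0 < γ2 p)
    (hakp8 : ∀ p a b, γ2 p * gi p a b = ∑ c, ∑ d, θ p a c * θ p b d * ind η x p c d)
    (u : (Fin n → ℝ) → ℝ) (p : Fin n → ℝ) (i : Fin m) :
    Dop η x θ γ2 u p i = ∑ a, ∑ c, gi p a c * pd a u p * pd c (fun q => x q i) p := by
  have hne : γ2 p ≠ 0 := ne_of_gt (hγ p)
  unfold Dop pbr
  have h1 : ∀ v : (Fin n → ℝ) → ℝ, ∀ k' : Fin m,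
      (∑ a, ∑ b, θ p a b * pd a v p * pd b (fun q => x q k') p)
      = ∑ a, pd a v p * (∑ b, θ p a b * pd b (fun q => x q k') p) := by
    intro v k'
    refine Finset.sum_congr rfl fun a _ => ?_
    rw [Finset.mul_sum]
    exact Finset.sum_congr rfl fun b _ => by ring
  have h2 : (∑ k, ∑ l, (∑ a, ∑ b, θ p a b * pd a u p * pd b (fun q => x q k) p)
        * (∑ c, ∑ d, θ p c d * pd c (fun q => x q i) p * pd d (fun q => x q l) p)
        * η (x p) k l)
      = ∑ a, ∑ c, pd a u p * pd c (fun q => x q i) p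
          * (∑ k, ∑ l, (∑ b, θ p a b * pd b (fun q => x q k) p)
             * (∑ d, θ p c d * pd d (fun q => x q l) p) * η (x p) k l) := by
    have := sum_interchange (fun a => pd a u p)
      (fun a k => ∑ b, θ p a b * pd b (fun q => x q k) p)
      (fun c => pd c (fun q => x q i) p)
      (fun c l => ∑ d, θ p c d * pd d (fun q => x q l) p)
      (fun k l => η (x p) k l)
    calc _ = ∑ k, ∑ l, (∑ a, pd a u p * (∑ b, θ p a b * pd b (fun q => x q k) p))
          * (∑ c, pd c (fun q => x q i) p * (∑ d, θ p c d * pd d (fun q => x q l) p))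
          * η (x p) k l := by
            refine Finset.sum_congr rfl fun k _ => Finset.sum_congr rfl fun l _ => ?_
            rw [h1 u k, h1 (fun q => x q i) l]
      _ = _ := this
  have h3 : ∀ a c : Fin n,
      (∑ k, ∑ l, (∑ b, θ p a b * pd b (fun q => x q k) p)
        * (∑ d, θ p c d * pd d (fun q => x q l) p) * η (x p) k l)
      = γ2 p * gi p a c := by
    intro a c
    rw [sum_interchange (fun b => θ p a b) (fun b k => pd b (fun q => x q k) p)
      (fun d => θ p c d) (fun d l => pd d (fun q => x q l) p)
      (fun k l => η (x p) k l)]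
    rw [hakp8 p a c]
    refine Finset.sum_congr rfl fun b _ => Finset.sum_congr rfl fun d _ => ?_
    unfold ind
    congr 1
    exact Finset.sum_congr rfl fun k _ => Finset.sum_congr rfl fun l _ => by ring
  rw [h2]
  rw [Finset.mul_sum]
  refine Finset.sum_congr rfl fun a _ => ?_
  rw [Finset.mul_sum]
  refine Finset.sum_congr rfl fun c _ => ?_
  rw [h3 a c]
  field_simp

end Dop
section MoreHelpers

variable {k m n : ℕ}

lemma sum_swap4 {A B C D : Type*} [Fintype A] [Fintype B] [Fintype C] [Fintype D]
    (M : A → B → C → D → ℝ) :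
    ∑ a, ∑ b, ∑ c, ∑ d, M a b c d = ∑ c, ∑ d, ∑ a, ∑ b, M a b c d := by
  calc ∑ a, ∑ b, ∑ c, ∑ d, M a b c d
      = ∑ a, ∑ c, ∑ b, ∑ d, M a b c d :=
        Finset.sum_congr rfl fun a _ => Finset.sum_comm
    _ = ∑ c, ∑ a, ∑ b, ∑ d, M a b c d := Finset.sum_comm
    _ = ∑ c, ∑ a, ∑ d, ∑ b, M a b c d :=
        Finset.sum_congr rfl fun c _ => Finset.sum_congr rfl fun a _ => Finset.sum_comm
    _ = ∑ c, ∑ d, ∑ a, ∑ b, M a b c d :=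
        Finset.sum_congr rfl fun c _ => Finset.sum_comm

lemma sum_swap14 {A B C D : Type*} [Fintype A] [Fintype B] [Fintype C] [Fintype D]
    (M : A → B → C → D → ℝ) :
    ∑ a, ∑ b, ∑ c, ∑ d, M a b c d = ∑ d, ∑ b, ∑ c, ∑ a, M a b c d := by
  calc ∑ a, ∑ b, ∑ c, ∑ d, M a b c d
      = ∑ a, ∑ b, ∑ d, ∑ c, M a b c d :=
        Finset.sum_congr rfl fun a _ => Finset.sum_congr rfl fun b _ => Finset.sum_comm
    _ = ∑ a, ∑ d, ∑ b, ∑ c, M a b c d :=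
        Finset.sum_congr rfl fun a _ => Finset.sum_comm
    _ = ∑ d, ∑ a, ∑ b, ∑ c, M a b c d := Finset.sum_comm
    _ = ∑ d, ∑ b, ∑ a, ∑ c, M a b c d :=
        Finset.sum_congr rfl fun d _ => Finset.sum_comm
    _ = ∑ d, ∑ b, ∑ c, ∑ a, M a b c d :=
        Finset.sum_congr rfl fun d _ => Finset.sum_congr rfl fun b _ => Finset.sum_comm

lemma Chr_symm (g gi : (Fin k → ℝ) → Fin k → Fin k → ℝ)
    (hsym : ∀ q i j, g q i j = g q j i) (q : Fin k → ℝ) (a b c : Fin k) :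
    Chr g gi q a b c = Chr g gi q a c b := by
  unfold Chr
  congr 1
  refine Finset.sum_congr rfl fun d _ => ?_
  have h1 : (fun r => g r d c) = (fun r => g r c d) := funext fun r => hsym r d c
  have h2 : (fun r => g r d b) = (fun r => g r b d) := funext fun r => hsym r d b
  have h3 : (fun r => g r b c) = (fun r => g r c b) := funext fun r => hsym r b c
  rw [h3]
  ring

lemma contDiff_pd (f : (Fin k → ℝ) → ℝ) (hf : ContDiff ℝ (⊤ : ℕ∞) f) (e : Fin k) :
    ContDiff ℝ (⊤ : ℕ∞) (fun q => pd e f q) := by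
  have h1 : ContDiff ℝ (⊤ : ℕ∞) (fderiv ℝ f) := hf.fderiv_right (m := (⊤ : ℕ∞)) (by simp)
  exact (ContinuousLinearMap.apply ℝ ℝ (Pi.single e 1)).contDiff.comp h1

lemma pd_mul3 {f g h : (Fin k → ℝ) → ℝ} {p : Fin k → ℝ} (a : Fin k)
    (hf : DifferentiableAt ℝ f p) (hg : DifferentiableAt ℝ g p)
    (hh : DifferentiableAt ℝ h p) :
    pd a (fun q => f q * g q * h q) p
      = pd a f p * g p * h p + f p * pd a g p * h p + f p * g p * pd a h p := by
  rw [show (fun q => f q * g q * h q) = (fun q => (f q * g q) * h q) from rfl,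
    pd_mul (f := fun q => f q * g q) a (hf.mul hg) hh, pd_mul a hf hg]
  ring

end MoreHelpers

section NhV

variable {n m : ℕ}

lemma nhV_eq (η ηi : (Fin m → ℝ) → Fin m → Fin m → ℝ) (x : (Fin n → ℝ) → Fin m → ℝ)
    (θ : (Fin n → ℝ) → Fin n → Fin n → ℝ) (γ2 : (Fin n → ℝ) → ℝ)
    (gi : (Fin n → ℝ) → Fin n → Fin n → ℝ)
    (hγ : ∀ p, 0 < γ2 p)
    (hakp8 : ∀ p a b, γ2 p * gi p a b = ∑ c, ∑ d, θ p a c * θ p b d * ind η x p c d)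
    (V : (Fin n → ℝ) → Fin m → ℝ) (p : Fin n → ℝ) (i j : Fin m) :
    nhV η ηi x θ γ2 V p i j
      = ∑ a, ∑ c, gi p a c * pd c (fun q => x q i) p * barD η ηi x V p a j := by
  unfold nhV Dmat
  rw [dop_eq η x θ γ2 gi hγ hakp8 (fun q => V q j) p i]
  have hD : ∀ k : Fin m, Dop η x θ γ2 (fun q => x q k) p i
      = ∑ a, ∑ c, gi p a c * pd a (fun q => x q k) p * pd c (fun q => x q i) p :=
    fun k => dop_eq η x θ γ2 gi hγ hakp8 (fun q => x q k) p i
  have hsplit : ∀ a c : Fin n,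
      gi p a c * pd c (fun q => x q i) p * barD η ηi x V p a j
      = gi p a c * pd a (fun q => V q j) p * pd c (fun q => x q i) p
        + ∑ k, ∑ l, gi p a c * pd c (fun q => x q i) p
            * (Chr η ηi (x p) j k l * pd a (fun q => x q k) p * V p l) := by
    intro a c
    unfold barD
    rw [mul_add]
    refine congrArg₂ HAdd.hAdd (by ring) ?_
    simp only [Finset.mul_sum]
  calc _ = ∑ a, ∑ c, gi p a c * pd a (fun q => V q j) p * pd c (fun q => x q i) p
        + ∑ k, ∑ l, (∑ a, ∑ c, gi p a c * pd a (fun q => x q k) p * pd c (fun q => x q i) p)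
            * Chr η ηi (x p) j k l * V p l := by
        congr 1
        refine Finset.sum_congr rfl fun k _ => Finset.sum_congr rfl fun l _ => ?_
        rw [hD k]
    _ = ∑ a, ∑ c, gi p a c * pd a (fun q => V q j) p * pd c (fun q => x q i) p
        + ∑ a, ∑ c, ∑ k, ∑ l, gi p a c * pd c (fun q => x q i) p
            * (Chr η ηi (x p) j k l * pd a (fun q => x q k) p * V p l) := by
        congr 1
        calc ∑ k, ∑ l, (∑ a, ∑ c, gi p a c * pd a (fun q => x q k) p * pd c (fun q => x q i) p)
              * Chr η ηi (x p) j k l * V p l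
            = ∑ k, ∑ l, ∑ a, ∑ c, gi p a c * pd c (fun q => x q i) p
              * (Chr η ηi (x p) j k l * pd a (fun q => x q k) p * V p l) := by
              refine Finset.sum_congr rfl fun k _ => Finset.sum_congr rfl fun l _ => ?_
              rw [Finset.sum_mul, Finset.sum_mul]
              refine Finset.sum_congr rfl fun a _ => ?_
              rw [Finset.sum_mul, Finset.sum_mul]
              exact Finset.sum_congr rfl fun c _ => by ring
          _ = _ := sum_swap4 _
    _ = _ := by
        rw [← Finset.sum_add_distrib]
        refine Finset.sum_congr rfl fun a _ => ?_
        rw [← Finset.sum_add_distrib]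
        exact Finset.sum_congr rfl fun c _ => (hsplit a c).symm

lemma mul_sum2 {A B : Type*} [Fintype A] [Fintype B] (r : ℝ) (f : A → B → ℝ) :
    r * (∑ a, ∑ b, f a b) = ∑ a, ∑ b, r * f a b := by
  rw [Finset.mul_sum]
  exact Finset.sum_congr rfl fun a _ => Finset.mul_sum _ _ _

lemma claim1 (η ηi : (Fin m → ℝ) → Fin m → Fin m → ℝ) (x : (Fin n → ℝ) → Fin m → ℝ)
    (θ : (Fin n → ℝ) → Fin n → Fin n → ℝ) (γ2 : (Fin n → ℝ) → ℝ)
    (gi : (Fin n → ℝ) → Fin n → Fin n → ℝ)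
    (hηsym : ∀ q i j, η q i j = η q j i)
    (hγ : ∀ p, 0 < γ2 p)
    (hakp8 : ∀ p a b, γ2 p * gi p a b = ∑ c, ∑ d, θ p a c * θ p b d * ind η x p c d)
    (N : (Fin n → ℝ) → Fin m → ℝ) (p : Fin n → ℝ) (X : Fin m → ℝ) (i : Fin m) :
    (∑ j, ∑ k, Bmap η ηi x θ γ2 N p i j * η (x p) j k * X k)
      = - γ2 p * ∑ a, ∑ b,
          (∑ i', ∑ j', η (x p) i' j' * X i' * barD η ηi x N p a j')
          * gi p a b * pd b (fun q => x q i) p := by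
  have hB : ∀ j', Bmap η ηi x θ γ2 N p i j'
      = -(γ2 p * ∑ a, ∑ c, gi p a c * pd c (fun q => x q i) p * barD η ηi x N p a j') := by
    intro j'
    unfold Bmap
    rw [nhV_eq η ηi x θ γ2 gi hγ hakp8 N p i j', neg_mul]
  have hL : (∑ j, ∑ k, Bmap η ηi x θ γ2 N p i j * η (x p) j k * X k)
      = ∑ j, ∑ k, ∑ a, ∑ b, -(γ2 p * (η (x p) k j * X k * barD η ηi x N p a j
          * gi p a b * pd b (fun q => x q i) p)) := by
    refine Finset.sum_congr rfl fun j _ => Finset.sum_congr rfl fun k _ => ?_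
    rw [hB j]
    have h0 : -(γ2 p * ∑ a, ∑ c, gi p a c * pd c (fun q => x q i) p * barD η ηi x N p a j)
          * η (x p) j k * X k
        = (-(γ2 p * η (x p) j k * X k))
          * ∑ a, ∑ c, gi p a c * pd c (fun q => x q i) p * barD η ηi x N p a j := by
      ring
    rw [h0, mul_sum2]
    refine Finset.sum_congr rfl fun a _ => Finset.sum_congr rfl fun b _ => ?_
    rw [hηsym (x p) k j]
    ring
  rw [hL, sum_swap4]
  rw [show - γ2 p * ∑ a, ∑ b,
        (∑ i', ∑ j', η (x p) i' j' * X i' * barD η ηi x N p a j')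
        * gi p a b * pd b (fun q => x q i) p
      = ∑ a, ∑ b, -(γ2 p) * ((∑ i', ∑ j', η (x p) i' j' * X i' * barD η ηi x N p a j')
        * gi p a b * pd b (fun q => x q i) p) from by
    rw [neg_mul]
    rw [show γ2 p * ∑ a, ∑ b,
        (∑ i', ∑ j', η (x p) i' j' * X i' * barD η ηi x N p a j')
        * gi p a b * pd b (fun q => x q i) p
      = ∑ a, ∑ b, γ2 p * ((∑ i', ∑ j', η (x p) i' j' * X i' * barD η ηi x N p a j')
        * gi p a b * pd b (fun q => x q i) p) from mul_sum2 _ _]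
    rw [← Finset.sum_neg_distrib]
    exact Finset.sum_congr rfl fun a _ => by
      rw [← Finset.sum_neg_distrib]
      exact Finset.sum_congr rfl fun b _ => by ring]
  refine Finset.sum_congr rfl fun a _ => Finset.sum_congr rfl fun b _ => ?_
  have h1 : -(γ2 p) * ((∑ i', ∑ j', η (x p) i' j' * X i' * barD η ηi x N p a j')
        * gi p a b * pd b (fun q => x q i) p)
      = (-(γ2 p * gi p a b * pd b (fun q => x q i) p))
        * ∑ i', ∑ j', η (x p) i' j' * X i' * barD η ηi x N p a j' := by ring
  rw [h1, mul_sum2]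
  rw [Finset.sum_comm]
  refine Finset.sum_congr rfl fun j _ => Finset.sum_congr rfl fun k _ => ?_
  ring

end NhV
section Calculus

variable {n m : ℕ}

lemma metric_compat (η ηi : (Fin m → ℝ) → Fin m → Fin m → ℝ) (hη : IsMetric η ηi)
    (y : Fin m → ℝ) (k i j : Fin m) :
    pd k (fun y => η y i j) y
      = ∑ l, (η y l j * Chr η ηi y l k i + η y i l * Chr η ηi y l k j) := by
  obtain ⟨hs, hsym, hpos, hinv⟩ := hη
  have hcontr : ∀ i' j' : Fin m, (∑ l, η y j' l * Chr η ηi y l k i')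
      = 1/2 * (pd k (fun r => η r j' i') y + pd i' (fun r => η r j' k) y
          - pd j' (fun r => η r k i') y) := by
    intro i' j'
    unfold Chr
    calc ∑ l, η y j' l * (1/2 * ∑ d, ηi y l d *
          (pd k (fun r => η r d i') y + pd i' (fun r => η r d k) y - pd d (fun r => η r k i') y))
        = ∑ l, ∑ d, η y j' l * ηi y l d * (1/2 *
          (pd k (fun r => η r d i') y + pd i' (fun r => η r d k) y - pd d (fun r => η r k i') y)) := by
          refine Finset.sum_congr rfl fun l _ => ?_
          rw [Finset.mul_sum, Finset.mul_sum]
          exact Finset.sum_congr rfl fun d _ => by ring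
      _ = ∑ d, ∑ l, η y j' l * ηi y l d * (1/2 *
          (pd k (fun r => η r d i') y + pd i' (fun r => η r d k) y - pd d (fun r => η r k i') y)) :=
          Finset.sum_comm
      _ = ∑ d, (∑ l, η y j' l * ηi y l d) * (1/2 *
          (pd k (fun r => η r d i') y + pd i' (fun r => η r d k) y - pd d (fun r => η r k i') y)) := by
          refine Finset.sum_congr rfl fun d _ => ?_
          rw [Finset.sum_mul]
      _ = ∑ d, (if j' = d then (1:ℝ) else 0) * (1/2 *
          (pd k (fun r => η r d i') y + pd i' (fun r => η r d k) y - pd d (fun r => η r k i') y)) := by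
          refine Finset.sum_congr rfl fun d _ => ?_
          rw [hinv y j' d]
      _ = _ := by
          simp [Finset.sum_ite_eq, ite_mul]
  rw [Finset.sum_add_distrib]
  have e1 : (∑ l, η y l j * Chr η ηi y l k i) = ∑ l, η y j l * Chr η ηi y l k i :=
    Finset.sum_congr rfl fun l _ => by rw [hsym y l j]
  have e2 : (∑ l, η y i l * Chr η ηi y l k j) = 1/2 * (pd k (fun r => η r i j) y
      + pd j (fun r => η r i k) y - pd i (fun r => η r k j) y) := hcontr j i
  rw [e1, hcontr i j, e2]
  have f1 : (fun r => η r j i) = (fun r => η r i j) := funext fun r => hsym r j i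
  have f2 : (fun r => η r j k) = (fun r => η r k j) := funext fun r => hsym r j k
  have f3 : (fun r => η r i k) = (fun r => η r k i) := funext fun r => hsym r i k
  rw [f1, f2, f3]
  ring

variable (η ηi : (Fin m → ℝ) → Fin m → Fin m → ℝ) (x : (Fin n → ℝ) → Fin m → ℝ)
  (N : (Fin n → ℝ) → Fin m → ℝ)

lemma L_zero (hη : IsMetric η ηi) (hx : SmoothEmb x)
    (hNs : ∀ i, ContDiff ℝ (⊤ : ℕ∞) fun q => N q i)
    (hN3 : ∀ p a, (∑ i, ∑ j, η (x p) i j * N p i * pd a (fun q => x q j) p) = 0)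
    (p : Fin n → ℝ) (a e : Fin n) :
    ∑ i, ∑ j,
      ((∑ k, pd k (fun y => η y i j) (x p) * pd a (fun q => x q k) p) * N p i
          * pd e (fun q => x q j) p
        + η (x p) i j * pd a (fun q => N q i) p * pd e (fun q => x q j) p
        + η (x p) i j * N p i * pd a (fun q => pd e (fun r => x r j) q) p) = 0 := by
  have dx : ∀ (j : Fin m) (q : Fin n → ℝ), DifferentiableAt ℝ (fun r => x r j) q :=
    fun j q => ((hx j).differentiable (by simp)) q
  have dN : ∀ (j : Fin m) (q : Fin n → ℝ), DifferentiableAt ℝ (fun r => N r j) q :=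
    fun j q => ((hNs j).differentiable (by simp)) q
  have dpdx : ∀ (e' : Fin n) (j : Fin m) (q : Fin n → ℝ),
      DifferentiableAt ℝ (fun r => pd e' (fun s => x s j) r) q :=
    fun e' j q => ((contDiff_pd _ (hx j) e').differentiable (by simp)) q
  have cηx : ∀ i j : Fin m, ContDiff ℝ (⊤ : ℕ∞) (fun q => η (x q) i j) := by
    intro i j
    exact (hη.1 i j).comp (contDiff_pi.mpr hx)
  have dηx : ∀ (i j : Fin m) (q : Fin n → ℝ), DifferentiableAt ℝ (fun r => η (x r) i j) q :=
    fun i j q => ((cηx i j).differentiable (by simp)) q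
  have dterm : ∀ (i j : Fin m) (q : Fin n → ℝ),
      DifferentiableAt ℝ (fun r => η (x r) i j * N r i * pd e (fun s => x s j) r) q :=
    fun i j q => ((dηx i j q).mul (dN i q)).mul (dpdx e j q)
  have hpd0 : pd a (fun q => ∑ i, ∑ j, η (x q) i j * N q i * pd e (fun r => x r j) q) p = 0 := by
    have h0 : (fun q => ∑ i, ∑ j, η (x q) i j * N q i * pd e (fun r => x r j) q)
        = (fun _ => (0:ℝ)) := funext fun q => hN3 q e
    rw [h0]
    unfold pd
    simp
  rw [← hpd0]
  rw [pd_sum Finset.univ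
    (fun i => fun q => ∑ j, η (x q) i j * N q i * pd e (fun r => x r j) q) a
    (fun i _ => by
      exact DifferentiableAt.fun_sum fun j _ => dterm i j p)]
  refine (Finset.sum_congr rfl fun i _ => ?_).symm
  rw [pd_sum Finset.univ
    (fun j => fun q => η (x q) i j * N q i * pd e (fun r => x r j) q) a
    (fun j _ => dterm i j p)]
  refine (Finset.sum_congr rfl fun j _ => ?_).symm
  rw [pd_mul3 a (dηx i j p) (dN i p) (dpdx e j p)]
  have hcomp : pd a (fun q => η (x q) i j) p
      = ∑ k, pd k (fun y => η y i j) (x p) * pd a (fun q => x q k) p :=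
    pd_comp (fun y => η y i j) x p a (((hη.1 i j).differentiable (by simp)) (x p)) (fun k => dx k p)
  rw [hcomp]

end Calculus
section Symmetry

variable {n m : ℕ}
variable (η ηi : (Fin m → ℝ) → Fin m → Fin m → ℝ) (x : (Fin n → ℝ) → Fin m → ℝ)
  (N : (Fin n → ℝ) → Fin m → ℝ)

lemma S_eq (hη : IsMetric η ηi) (hx : SmoothEmb x)
    (hNs : ∀ i, ContDiff ℝ (⊤ : ℕ∞) fun q => N q i)
    (hN3 : ∀ p a, (∑ i, ∑ j, η (x p) i j * N p i * pd a (fun q => x q j) p) = 0)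
    (p : Fin n → ℝ) (a e : Fin n) :
    (∑ j, ∑ k, η (x p) j k * barD η ηi x N p a j * pd e (fun q => x q k) p)
      = -(∑ i, ∑ j, ∑ k, ∑ l, η (x p) i l * Chr η ηi (x p) l k j
            * pd a (fun q => x q k) p * N p i * pd e (fun q => x q j) p)
        - ∑ i, ∑ j, η (x p) i j * N p i * pd a (fun q => pd e (fun r => x r j) q) p := by
  -- the monomial
  have hM := sum_swap14 (fun l j k i => η (x p) l j * Chr η ηi (x p) l k i
      * pd a (fun q => x q k) p * N p i * pd e (fun q => x q j) p)
  -- Step 1: expand barD and split S into T1 + Γ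
  have hS : (∑ j, ∑ k, η (x p) j k * barD η ηi x N p a j * pd e (fun q => x q k) p)
      = (∑ i, ∑ j, η (x p) i j * pd a (fun q => N q i) p * pd e (fun q => x q j) p)
        + ∑ l, ∑ j, ∑ k, ∑ i, η (x p) l j * Chr η ηi (x p) l k i
          * pd a (fun q => x q k) p * N p i * pd e (fun q => x q j) p := by
    have expand : ∀ j k : Fin m,
        η (x p) j k * barD η ηi x N p a j * pd e (fun q => x q k) p
        = η (x p) j k * pd a (fun q => N q j) p * pd e (fun q => x q k) p
          + ∑ u, ∑ v, η (x p) j k * Chr η ηi (x p) j u v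
              * pd a (fun q => x q u) p * N p v * pd e (fun q => x q k) p := by
      intro j k
      unfold barD
      rw [show (pd a (fun q => N q j) p
          + ∑ u, ∑ v, Chr η ηi (x p) j u v * pd a (fun q => x q u) p * N p v)
          = pd a (fun q => N q j) p
          + ∑ u, ∑ v, Chr η ηi (x p) j u v * pd a (fun q => x q u) p * N p v from rfl]
      rw [mul_add, add_mul]
      refine congrArg₂ HAdd.hAdd rfl ?_
      rw [Finset.mul_sum, Finset.sum_mul]
      refine Finset.sum_congr rfl fun u _ => ?_
      rw [Finset.mul_sum, Finset.sum_mul]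
      exact Finset.sum_congr rfl fun v _ => by ring
    calc (∑ j, ∑ k, η (x p) j k * barD η ηi x N p a j * pd e (fun q => x q k) p)
        = ∑ j, ∑ k, (η (x p) j k * pd a (fun q => N q j) p * pd e (fun q => x q k) p
          + ∑ u, ∑ v, η (x p) j k * Chr η ηi (x p) j u v
              * pd a (fun q => x q u) p * N p v * pd e (fun q => x q k) p) :=
          Finset.sum_congr rfl fun j _ => Finset.sum_congr rfl fun k _ => expand j k
      _ = ∑ j, ((∑ k, η (x p) j k * pd a (fun q => N q j) p * pd e (fun q => x q k) p)
            + ∑ k, ∑ u, ∑ v, η (x p) j k * Chr η ηi (x p) j u v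
              * pd a (fun q => x q u) p * N p v * pd e (fun q => x q k) p) :=
          Finset.sum_congr rfl fun j _ => Finset.sum_add_distrib
      _ = _ := Finset.sum_add_distrib
  -- Step 2: from L_zero, T1 = -(P1 + P2) - A2
  have hz := L_zero η ηi x N hη hx hNs hN3 p a e
  have hsplit : (∑ i, ∑ j,
      ((∑ k, pd k (fun y => η y i j) (x p) * pd a (fun q => x q k) p) * N p i
          * pd e (fun q => x q j) p
        + η (x p) i j * pd a (fun q => N q i) p * pd e (fun q => x q j) p
        + η (x p) i j * N p i * pd a (fun q => pd e (fun r => x r j) q) p))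
      = (∑ i, ∑ j, (∑ k, pd k (fun y => η y i j) (x p) * pd a (fun q => x q k) p) * N p i
          * pd e (fun q => x q j) p)
        + (∑ i, ∑ j, η (x p) i j * pd a (fun q => N q i) p * pd e (fun q => x q j) p)
        + ∑ i, ∑ j, η (x p) i j * N p i * pd a (fun q => pd e (fun r => x r j) q) p := by
    calc _ = ∑ i, ((∑ j, (∑ k, pd k (fun y => η y i j) (x p) * pd a (fun q => x q k) p) * N p i
          * pd e (fun q => x q j) p)
        + (∑ j, η (x p) i j * pd a (fun q => N q i) p * pd e (fun q => x q j) p)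
        + ∑ j, η (x p) i j * N p i * pd a (fun q => pd e (fun r => x r j) q) p) :=
          Finset.sum_congr rfl fun i _ => by
            rw [Finset.sum_add_distrib, Finset.sum_add_distrib]
      _ = _ := by rw [Finset.sum_add_distrib, Finset.sum_add_distrib]
  rw [hsplit] at hz
  -- Step 3: expand the first term of hz via metric compatibility
  have hA0 : (∑ i, ∑ j, (∑ k, pd k (fun y => η y i j) (x p) * pd a (fun q => x q k) p) * N p i
          * pd e (fun q => x q j) p)
      = (∑ i, ∑ j, ∑ k, ∑ l, η (x p) l j * Chr η ηi (x p) l k i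
            * pd a (fun q => x q k) p * N p i * pd e (fun q => x q j) p)
        + ∑ i, ∑ j, ∑ k, ∑ l, η (x p) i l * Chr η ηi (x p) l k j
            * pd a (fun q => x q k) p * N p i * pd e (fun q => x q j) p := by
    rw [← Finset.sum_add_distrib]
    refine Finset.sum_congr rfl fun i _ => ?_
    rw [← Finset.sum_add_distrib]
    refine Finset.sum_congr rfl fun j _ => ?_
    rw [← Finset.sum_add_distrib]
    rw [show (∑ k, pd k (fun y => η y i j) (x p) * pd a (fun q => x q k) p) * N p i
          * pd e (fun q => x q j) p
        = ∑ k, pd k (fun y => η y i j) (x p)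
            * (pd a (fun q => x q k) p * N p i * pd e (fun q => x q j) p) from by
      rw [Finset.sum_mul, Finset.sum_mul]
      exact Finset.sum_congr rfl fun k _ => by ring]
    refine Finset.sum_congr rfl fun k _ => ?_
    rw [metric_compat η ηi hη (x p) k i j]
    rw [Finset.sum_mul, ← Finset.sum_add_distrib]
    refine Finset.sum_congr rfl fun l _ => ?_
    ring
  rw [hA0] at hz
  -- Step 4: identify Γ with P1 via index permutation
  rw [hS, hM]
  -- now conclude by linear arithmetic from hz
  linarith [hz]

lemma S_symm (hη : IsMetric η ηi) (hx : SmoothEmb x)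
    (hNs : ∀ i, ContDiff ℝ (⊤ : ℕ∞) fun q => N q i)
    (hN3 : ∀ p a, (∑ i, ∑ j, η (x p) i j * N p i * pd a (fun q => x q j) p) = 0)
    (p : Fin n → ℝ) (a e : Fin n) :
    (∑ j, ∑ k, η (x p) j k * barD η ηi x N p a j * pd e (fun q => x q k) p)
      = ∑ j, ∑ k, η (x p) j k * barD η ηi x N p e j * pd a (fun q => x q k) p := by
  rw [S_eq η ηi x N hη hx hNs hN3 p a e, S_eq η ηi x N hη hx hNs hN3 p e a]
  have hP2 : (∑ i, ∑ j, ∑ k, ∑ l, η (x p) i l * Chr η ηi (x p) l k j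
        * pd a (fun q => x q k) p * N p i * pd e (fun q => x q j) p)
      = ∑ i, ∑ j, ∑ k, ∑ l, η (x p) i l * Chr η ηi (x p) l k j
        * pd e (fun q => x q k) p * N p i * pd a (fun q => x q j) p := by
    refine Finset.sum_congr rfl fun i _ => ?_
    rw [Finset.sum_comm]
    refine Finset.sum_congr rfl fun j _ => Finset.sum_congr rfl fun k _ =>
      Finset.sum_congr rfl fun l _ => ?_
    rw [Chr_symm η ηi hη.2.1 (x p) l j k]
    ring
  have hA2 : (∑ i, ∑ j, η (x p) i j * N p i * pd a (fun q => pd e (fun r => x r j) q) p)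
      = ∑ i, ∑ j, η (x p) i j * N p i * pd e (fun q => pd a (fun r => x r j) q) p :=
    Finset.sum_congr rfl fun i _ => Finset.sum_congr rfl fun j _ => by
      rw [pd_pd_comm (fun r => x r j) (hx j) a e p]
  rw [hP2, hA2]

end Symmetry
section Claim2

variable {n m : ℕ}

lemma claim2 (η ηi : (Fin m → ℝ) → Fin m → Fin m → ℝ) (x : (Fin n → ℝ) → Fin m → ℝ)
    (θ : (Fin n → ℝ) → Fin n → Fin n → ℝ) (γ2 : (Fin n → ℝ) → ℝ)
    (gi : (Fin n → ℝ) → Fin n → Fin n → ℝ)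
    (N : (Fin n → ℝ) → Fin m → ℝ)
    (Wf : (Fin n → ℝ) → Fin n → Fin n → ℝ)
    (DNf : (Fin n → ℝ) → Fin n → Fin m → ℝ)
    (hη : IsMetric η ηi) (hx : SmoothEmb x)
    (hγ : ∀ p, 0 < γ2 p)
    (hakp7 : ∀ p a b, (∑ c, ind η x p a c * gi p c b) = if a = b then (1:ℝ) else 0)
    (hakp8 : ∀ p a b, γ2 p * gi p a b = ∑ c, ∑ d, θ p a c * θ p b d * ind η x p c d)
    (hNs : ∀ i, ContDiff ℝ (⊤ : ℕ∞) fun q => N q i)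
    (hN3 : ∀ p a, (∑ i, ∑ j, η (x p) i j * N p i * pd a (fun q => x q j) p) = 0)
    (hWein : ∀ p a i, barD η ηi x N p a i
      = -(∑ b, Wf p a b * pd b (fun q => x q i) p) + DNf p a i)
    (hDN : ∀ p a b, (∑ i, ∑ j, η (x p) i j * DNf p a i * pd b (fun q => x q j) p) = 0)
    (p : Fin n → ℝ) (c : (Fin n → ℝ) → Fin n → ℝ) (i : Fin m) :
    (∑ j, ∑ k, Bmap η ηi x θ γ2 N p i j * η (x p) j k * tv x c p k)
      = γ2 p * ∑ a, ∑ b, c p a * Wf p a b * pd b (fun q => x q i) p := by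
  have hηsym := hη.2.1
  rw [claim1 η ηi x θ γ2 gi hηsym hγ hakp8 N p (tv x c p) i]
  -- canonical S
  have h_SW : ∀ a e : Fin n,
      (∑ j, ∑ k, η (x p) j k * barD η ηi x N p a j * pd e (fun q => x q k) p)
      = -(∑ b, Wf p a b * ind η x p b e) := by
    intro a e
    calc (∑ j, ∑ k, η (x p) j k * barD η ηi x N p a j * pd e (fun q => x q k) p)
        = ∑ j, ∑ k, ((∑ b, -(Wf p a b
              * (η (x p) j k * pd b (fun q => x q j) p * pd e (fun q => x q k) p)))
            + η (x p) j k * DNf p a j * pd e (fun q => x q k) p) := by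
          refine Finset.sum_congr rfl fun j _ => Finset.sum_congr rfl fun k _ => ?_
          rw [hWein p a j]
          rw [show η (x p) j k * (-(∑ b, Wf p a b * pd b (fun q => x q j) p) + DNf p a j)
                * pd e (fun q => x q k) p
              = (-(η (x p) j k * pd e (fun q => x q k) p))
                  * (∑ b, Wf p a b * pd b (fun q => x q j) p)
                + η (x p) j k * DNf p a j * pd e (fun q => x q k) p from by ring]
          refine congrArg₂ HAdd.hAdd ?_ rfl
          rw [Finset.mul_sum]
          exact Finset.sum_congr rfl fun b _ => by ring
      _ = (∑ j, ∑ k, ∑ b, -(Wf p a b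
              * (η (x p) j k * pd b (fun q => x q j) p * pd e (fun q => x q k) p)))
          + ∑ j, ∑ k, η (x p) j k * DNf p a j * pd e (fun q => x q k) p := by
          rw [← Finset.sum_add_distrib]
          exact Finset.sum_congr rfl fun j _ => Finset.sum_add_distrib
      _ = (∑ j, ∑ k, ∑ b, -(Wf p a b
              * (η (x p) j k * pd b (fun q => x q j) p * pd e (fun q => x q k) p))) := by
          rw [hDN p a e, add_zero]
      _ = ∑ j, ∑ b, ∑ k, -(Wf p a b
              * (η (x p) j k * pd b (fun q => x q j) p * pd e (fun q => x q k) p)) :=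
          Finset.sum_congr rfl fun j _ => Finset.sum_comm
      _ = ∑ b, ∑ j, ∑ k, -(Wf p a b
              * (η (x p) j k * pd b (fun q => x q j) p * pd e (fun q => x q k) p)) :=
          Finset.sum_comm
      _ = -(∑ b, Wf p a b * ind η x p b e) := by
          rw [← Finset.sum_neg_distrib]
          refine Finset.sum_congr rfl fun b _ => ?_
          rw [show Wf p a b * ind η x p b e
              = ∑ j, ∑ k, Wf p a b
                * (η (x p) j k * pd b (fun q => x q j) p * pd e (fun q => x q k) p) from by
            rw [show ind η x p b e = ∑ j, ∑ k, η (x p) j k * pd b (fun q => x q j) p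
                * pd e (fun q => x q k) p from rfl]
            rw [mul_sum2]]
          rw [← Finset.sum_neg_distrib]
          exact Finset.sum_congr rfl fun j _ => Finset.sum_neg_distrib _
  have hIP2 : ∀ a : Fin n,
      (∑ i', ∑ j', η (x p) i' j' * tv x c p i' * barD η ηi x N p a j')
      = -(∑ e, ∑ f, c p e * Wf p e f * ind η x p f a) := by
    intro a
    have h_IP : (∑ i', ∑ j', η (x p) i' j' * tv x c p i' * barD η ηi x N p a j')
        = ∑ e, c p e * (∑ j, ∑ k, η (x p) j k * barD η ηi x N p a j
            * pd e (fun q => x q k) p) := by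
      calc (∑ i', ∑ j', η (x p) i' j' * tv x c p i' * barD η ηi x N p a j')
          = ∑ i', ∑ j', ∑ e, c p e * (η (x p) i' j' * pd e (fun q => x q i') p
              * barD η ηi x N p a j') := by
            refine Finset.sum_congr rfl fun i' _ => Finset.sum_congr rfl fun j' _ => ?_
            rw [show tv x c p i' = ∑ e, c p e * pd e (fun q => x q i') p from rfl]
            rw [Finset.mul_sum, Finset.sum_mul]
            exact Finset.sum_congr rfl fun e _ => by ring
        _ = ∑ i', ∑ e, ∑ j', c p e * (η (x p) i' j' * pd e (fun q => x q i') p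
              * barD η ηi x N p a j') :=
            Finset.sum_congr rfl fun i' _ => Finset.sum_comm
        _ = ∑ e, ∑ i', ∑ j', c p e * (η (x p) i' j' * pd e (fun q => x q i') p
              * barD η ηi x N p a j') := Finset.sum_comm
        _ = _ := by
            refine Finset.sum_congr rfl fun e _ => ?_
            calc (∑ i', ∑ j', c p e * (η (x p) i' j' * pd e (fun q => x q i') p
                  * barD η ηi x N p a j'))
                = ∑ j', ∑ i', c p e * (η (x p) i' j' * pd e (fun q => x q i') p
                  * barD η ηi x N p a j') := Finset.sum_comm
              _ = ∑ j', ∑ i', c p e * (η (x p) j' i' * barD η ηi x N p a j'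
                  * pd e (fun q => x q i') p) := by
                  refine Finset.sum_congr rfl fun j' _ => Finset.sum_congr rfl fun i' _ => ?_
                  rw [hηsym (x p) i' j']
                  ring
              _ = _ := (mul_sum2 _ _).symm
    rw [h_IP]
    calc (∑ e, c p e * (∑ j, ∑ k, η (x p) j k * barD η ηi x N p a j
            * pd e (fun q => x q k) p))
        = ∑ e, c p e * -(∑ f, Wf p e f * ind η x p f a) := by
          refine Finset.sum_congr rfl fun e _ => ?_
          rw [S_symm η ηi x N hη hx hNs hN3 p a e, h_SW e a]
      _ = -(∑ e, ∑ f, c p e * Wf p e f * ind η x p f a) := by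
          rw [← Finset.sum_neg_distrib]
          refine Finset.sum_congr rfl fun e _ => ?_
          rw [mul_neg, Finset.mul_sum]
          exact congrArg Neg.neg (Finset.sum_congr rfl fun f _ => by ring)
  -- assemble
  have hT : (∑ a, ∑ b, (∑ i', ∑ j', η (x p) i' j' * tv x c p i' * barD η ηi x N p a j')
        * gi p a b * pd b (fun q => x q i) p)
      = -(∑ a, ∑ b, ∑ e, ∑ f, c p e * Wf p e f * ind η x p f a * gi p a b
          * pd b (fun q => x q i) p) := by
    rw [← Finset.sum_neg_distrib]
    refine Finset.sum_congr rfl fun a _ => ?_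
    rw [← Finset.sum_neg_distrib]
    refine Finset.sum_congr rfl fun b _ => ?_
    rw [hIP2 a]
    rw [show -(∑ e, ∑ f, c p e * Wf p e f * ind η x p f a) * gi p a b
          * pd b (fun q => x q i) p
        = -((gi p a b * pd b (fun q => x q i) p)
            * ∑ e, ∑ f, c p e * Wf p e f * ind η x p f a) from by ring]
    rw [mul_sum2]
    exact congrArg Neg.neg (Finset.sum_congr rfl fun e _ =>
      Finset.sum_congr rfl fun f _ => by ring)
  rw [hT]
  have hT2 : (∑ a, ∑ b, ∑ e, ∑ f, c p e * Wf p e f * ind η x p f a * gi p a b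
        * pd b (fun q => x q i) p)
      = ∑ e, ∑ f, c p e * Wf p e f * pd f (fun q => x q i) p := by
    rw [sum_swap4]
    refine Finset.sum_congr rfl fun e _ => Finset.sum_congr rfl fun f _ => ?_
    calc (∑ a, ∑ b, c p e * Wf p e f * ind η x p f a * gi p a b * pd b (fun q => x q i) p)
        = ∑ b, ∑ a, c p e * Wf p e f * ind η x p f a * gi p a b * pd b (fun q => x q i) p :=
          Finset.sum_comm
      _ = ∑ b, (∑ a, ind η x p f a * gi p a b)
            * (c p e * Wf p e f * pd b (fun q => x q i) p) := by
          refine Finset.sum_congr rfl fun b _ => ?_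
          rw [Finset.sum_mul]
          exact Finset.sum_congr rfl fun a _ => by ring
      _ = ∑ b, (if f = b then (1:ℝ) else 0)
            * (c p e * Wf p e f * pd b (fun q => x q i) p) := by
          refine Finset.sum_congr rfl fun b _ => ?_
          rw [hakp7 p f b]
      _ = _ := by simp [ite_mul, Finset.sum_ite_eq]
  rw [hT2, neg_mul_neg]

end Claim2

/-- For `B_A^{ij} = −γ² ∇̂^i N_A^j` : for every `X ∈ TM`,
`B_A(X) = −γ² η(X, ∇̄_{e_a} N_A) g^{ab} e_b`, and for every `Y ∈ TΣ`,
`B_A(Y) = γ² W_A(Y)`, where `W_A` is the Weingarten map of the normal `N_A`. -/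
theorem statement_3 {n m r : ℕ}
    (η ηi : (Fin m → ℝ) → Fin m → Fin m → ℝ) (x : (Fin n → ℝ) → Fin m → ℝ)
    (θ : (Fin n → ℝ) → Fin n → Fin n → ℝ) (γ2 : (Fin n → ℝ) → ℝ)
    (gi : (Fin n → ℝ) → Fin n → Fin n → ℝ)
    (N : Fin r → (Fin n → ℝ) → Fin m → ℝ)
    (W : Fin r → (Fin n → ℝ) → Fin n → Fin n → ℝ)
    (DN : Fin r → (Fin n → ℝ) → Fin n → Fin m → ℝ)
    (hη : IsMetric η ηi) (hx : SmoothEmb x) (hakp : IsAKP η x θ γ2 gi)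
    (hN : NormalFrame η ηi x θ γ2 N)
    (hWein : ∀ A p a i, barD η ηi x (N A) p a i
      = -(∑ b, W A p a b * pd b (fun q => x q i) p) + DN A p a i)
    (hDN : ∀ A p a b, (∑ i, ∑ j, η (x p) i j * DN A p a i * pd b (fun q => x q j) p) = 0) :
    (∀ (A : Fin r) (p : Fin n → ℝ) (X : Fin m → ℝ) (i : Fin m),
      (∑ j, ∑ k, Bmap η ηi x θ γ2 (N A) p i j * η (x p) j k * X k)
        = - γ2 p * ∑ a, ∑ b,
            (∑ i', ∑ j', η (x p) i' j' * X i' * barD η ηi x (N A) p a j')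
            * gi p a b * pd b (fun q => x q i) p) ∧
    (∀ (A : Fin r) (p : Fin n → ℝ) (c : (Fin n → ℝ) → Fin n → ℝ) (i : Fin m),
      (∑ j, ∑ k, Bmap η ηi x θ γ2 (N A) p i j * η (x p) j k * tv x c p k)
        = γ2 p * ∑ a, ∑ b, c p a * W A p a b * pd b (fun q => x q i) p) := by
  obtain ⟨hθa, hθj, hθs, hgis, hγ2s, hγpos, hakp7, hakp8⟩ := hakp
  obtain ⟨hNsm, hNortho, hNtan, hNcomp⟩ := hN
  constructor
  · intro A p X i
    exact claim1 η ηi x θ γ2 gi hη.2.1 hγpos hakp8 (N A) p X i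
  · intro A p c i
    exact claim2 η ηi x θ γ2 gi (N A) (W A) (DN A) hη hx hγpos hakp7 hakp8
      (hNsm A) (fun p' a => hNtan A p' a) (fun p' a i' => hWein A p' a i')
      (fun p' a b => hDN A p' a b) p c i


end KP
end
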